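/- arXiv:2203.10967 — 6 statements merged into one kernel-verified Lean document; each statement's English description precedes it below -/
import Mathlib

section
/- The space Prp(A) of proper ideals of a commutative ring A with identity, endowed with the subspace topology inherited from the coarse lower topology on Idl(A), is a spectral space: it is quasi-compact, sober, and it has a basis of quasi-compact open sets that is closed under finite intersections. -/
open TopologicalSpace

/-- `v(I)`: the set of all ideals containing `I`. -/
def vSet {A : Type*} [CommRing A] (I : Ideal A) : Set (Ideal A) := {S : Ideal A | I ≤ S}

/-- The coarse lower topology on the set `Idl(A)` of all ideals of `A`: the topology with
closed subbase `{v(I) : I ∈ Idl(A)}`, i.e. generated by the open sets `v(I)ᶜ`. -/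
instance coarseLower (A : Type*) [CommRing A] : TopologicalSpace (Ideal A) :=
  generateFrom {U : Set (Ideal A) | ∃ I : Ideal A, U = (vSet I)ᶜ}

/-- `Prp(A)`: the proper ideals of `A`, with the subspace topology from `Idl(A)`. -/
abbrev Prp (A : Type*) [CommRing A] : Type _ := {I : Ideal A // I ≠ ⊤}

/-!
The sets `D(s) = {I | s ∩ I = ∅}`, for finite `s ⊆ A`, form a basis of `Prp(A)` closed under
intersections. Each `D(s)` is quasi-compact because every ultrafilter `𝒰` on `Prp(A)` converges to
the proper ideal `{a | a ∈ I for 𝒰-almost all I}`. Specialization is inclusion of ideals, which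
gives `T₀`, and the generic point of an irreducible closed set is the intersection of its members:
it lies in the set because irreducibility lets a basic neighbourhood `D(s)` meet it once each
`D({a})`, `a ∈ s`, does.
-/

open Set Topology

lemma isOpen_compl_vSet {A : Type*} [CommRing A] (I : Ideal A) : IsOpen (vSet I)ᶜ :=
  isOpen_generateFrom_of_mem ⟨I, rfl⟩

namespace Prp

variable {A : Type*} [CommRing A]

def basicOpen (s : Finset A) : Set (Prp A) := {I | ∀ a ∈ s, a ∉ (I : Ideal A)}

lemma basicOpen_eq_biInter (s : Finset A) : basicOpen s = ⋂ a ∈ s, basicOpen {a} := by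
  ext I
  simp [basicOpen]

lemma basicOpen_singleton (a : A) :
    basicOpen {a} = Subtype.val ⁻¹' (vSet (Ideal.span {a}))ᶜ := by
  ext I
  simp [basicOpen, vSet]

lemma basicOpen_union [DecidableEq A] (s t : Finset A) :
    basicOpen (s ∪ t) = basicOpen s ∩ basicOpen t := by
  ext I
  simp only [basicOpen, Finset.mem_union, mem_inter_iff]
  grind

lemma preimage_compl_vSet (I : Ideal A) :
    (Subtype.val : Prp A → Ideal A) ⁻¹' (vSet I)ᶜ = ⋃ a ∈ I, basicOpen {a} := by
  ext J
  simp [basicOpen, vSet, SetLike.not_le_iff_exists]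

theorem topology_eq_generateFrom :
    (instTopologicalSpaceSubtype : TopologicalSpace (Prp A)) =
      generateFrom (range basicOpen) := by
  refine le_antisymm (le_generateFrom ?_) ?_
  · rintro _ ⟨s, rfl⟩
    rw [basicOpen_eq_biInter]
    refine isOpen_biInter_finset fun a _ => ?_
    rw [basicOpen_singleton]
    exact continuous_subtype_val.isOpen_preimage _ (isOpen_compl_vSet _)
  · rw [instTopologicalSpaceSubtype, coarseLower, induced_generateFrom_eq]
    refine le_generateFrom ?_
    rintro _ ⟨_, ⟨I, rfl⟩, rfl⟩
    rw [preimage_compl_vSet]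
    exact @isOpen_biUnion _ _ (generateFrom _) _ _ fun a _ =>
      isOpen_generateFrom_of_mem ⟨{a}, rfl⟩

theorem isTopologicalBasis_basicOpen : IsTopologicalBasis (range (basicOpen (A := A))) := by
  classical
  refine isTopologicalBasis_of_subbasis_of_finiteInter topology_eq_generateFrom ⟨⟨∅, ?_⟩, ?_⟩
  · simp [basicOpen]
  · rintro _ ⟨s, rfl⟩ _ ⟨t, rfl⟩
    exact ⟨s ∪ t, basicOpen_union s t⟩

lemma isOpen_basicOpen (s : Finset A) : IsOpen (basicOpen s) :=
  isTopologicalBasis_basicOpen.isOpen ⟨s, rfl⟩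

theorem specializes_iff_le {I J : Prp A} : I ⤳ J ↔ (I : Ideal A) ≤ J := by
  rw [specializes_iff_forall_open]
  constructor
  · intro h a haI
    by_contra haJ
    exact h _ (isOpen_basicOpen {a}) (by simpa [basicOpen] using haJ) a
      (Finset.mem_singleton_self a) haI
  · intro hle U hU hJU
    obtain ⟨_, ⟨s, rfl⟩, hJs, hsU⟩ := isTopologicalBasis_basicOpen.exists_subset_of_mem_open hJU hU
    exact hsU fun a ha haI => hJs a ha (hle haI)

instance : T0Space (Prp A) :=
  (t0Space_iff_inseparable _).2 fun _ _ h =>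
    Subtype.ext <| le_antisymm (specializes_iff_le.1 h.specializes)
      (specializes_iff_le.1 h.specializes')

def limIdeal (f : Filter (Prp A)) : Ideal A where
  carrier := {a | ∀ᶠ I in f, a ∈ I.1}
  zero_mem' := Filter.Eventually.of_forall fun I => I.1.zero_mem
  add_mem' ha hb := by
    filter_upwards [ha, hb] with I haI hbI
    exact I.1.add_mem haI hbI
  smul_mem' c _ ha := by
    filter_upwards [ha] with I haI
    exact (I : Ideal A).smul_mem c haI

lemma mem_limIdeal {f : Filter (Prp A)} {a : A} : a ∈ limIdeal f ↔ ∀ᶠ I in f, a ∈ I.1 :=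
  Iff.rfl

lemma limIdeal_ne_top (f : Filter (Prp A)) [f.NeBot] : limIdeal f ≠ ⊤ := fun h => by
  obtain ⟨I, hI⟩ := (mem_limIdeal.1 ((Ideal.eq_top_iff_one _).1 h)).exists
  exact I.2 ((Ideal.eq_top_iff_one _).2 hI)

def limPoint (f : Ultrafilter (Prp A)) : Prp A :=
  ⟨limIdeal f, limIdeal_ne_top (f : Filter (Prp A))⟩

lemma limPoint_mem_basicOpen_iff (f : Ultrafilter (Prp A)) (s : Finset A) :
    limPoint f ∈ basicOpen s ↔ basicOpen s ∈ f := by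
  change (∀ a ∈ s, a ∉ limIdeal (f : Filter (Prp A))) ↔ _
  simp only [mem_limIdeal, ← Ultrafilter.eventually_not]
  exact (Filter.eventually_all_finset s).symm

lemma le_nhds_limPoint (f : Ultrafilter (Prp A)) : ↑f ≤ 𝓝 (limPoint f) :=
  (isTopologicalBasis_basicOpen.nhds_hasBasis).ge_iff.2 fun
    | _, ⟨⟨s, rfl⟩, hs⟩ => (limPoint_mem_basicOpen_iff f s).1 hs

theorem isCompact_basicOpen (s : Finset A) : IsCompact (basicOpen s) :=
  isCompact_iff_ultrafilter_le_nhds.2 fun f hf =>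
    ⟨limPoint f, (limPoint_mem_basicOpen_iff f s).2 (Filter.le_principal_iff.1 hf),
      le_nhds_limPoint f⟩

instance : CompactSpace (Prp A) :=
  isCompact_univ_iff.1 <| by simpa [basicOpen] using isCompact_basicOpen (∅ : Finset A)

theorem mem_of_sInf_le {C : Set (Prp A)} (hC : IsIrreducible C) (hCc : IsClosed C) {L : Prp A}
    (hL : sInf (Subtype.val '' C) ≤ (L : Ideal A)) : L ∈ C := by
  rw [← hCc.closure_eq, isTopologicalBasis_basicOpen.mem_closure_iff]
  rintro _ ⟨s, rfl⟩ hLs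
  have hmeet : ∀ a ∈ s, (C ∩ basicOpen {a}).Nonempty := fun a ha => by
    have : a ∉ sInf (Subtype.val '' C) := fun h => hLs a ha (hL h)
    simpa [Ideal.mem_sInf, basicOpen, Set.Nonempty] using this
  obtain ⟨J, hJC, hJs⟩ := isIrreducible_iff_sInter.1 hC (s.image fun a => basicOpen {a})
    (by simpa using fun a _ => isOpen_basicOpen {a}) (by simpa using hmeet)
  exact ⟨J, by simpa [basicOpen_eq_biInter s] using hJs, hJC⟩

instance : QuasiSober (Prp A) where
  sober {C} hC hCc := by
    obtain ⟨I₀, hI₀⟩ := hC.nonempty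
    have hle : ∀ J ∈ C, sInf (Subtype.val '' C) ≤ (J : Ideal A) := fun J hJ =>
      sInf_le ⟨J, hJ, rfl⟩
    let L : Prp A :=
      ⟨sInf (Subtype.val '' C), fun h => I₀.2 (top_le_iff.1 (h.symm.trans_le (hle I₀ hI₀)))⟩
    have hLC : L ∈ C := mem_of_sInf_le hC hCc le_rfl
    exact ⟨L, isGenericPoint_iff_specializes.2 fun J =>
      ⟨fun h => h.mem_closed hCc hLC, fun hJ => specializes_iff_le.2 (hle J hJ)⟩⟩

end Prp

/-- The proper space `Prp(A)` is spectral: quasi-compact, sober (T₀ and quasi-sober), and it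
has a basis of quasi-compact open sets that is closed under finite intersections. -/
theorem prp_isSpectral (A : Type*) [CommRing A] :
    CompactSpace (Prp A) ∧ T0Space (Prp A) ∧ QuasiSober (Prp A) ∧
      ∃ B : Set (Set (Prp A)), IsTopologicalBasis B ∧
        (∀ U ∈ B, IsOpen U ∧ IsCompact U) ∧
        (∀ U ∈ B, ∀ V ∈ B, U ∩ V ∈ B) := by
  classical
  refine ⟨inferInstance, inferInstance, inferInstance, range Prp.basicOpen,
    Prp.isTopologicalBasis_basicOpen, ?_, ?_⟩
  · rintro _ ⟨s, rfl⟩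
    exact ⟨Prp.isOpen_basicOpen s, Prp.isCompact_basicOpen s⟩
  · rintro _ ⟨s, rfl⟩ _ ⟨t, rfl⟩
    exact ⟨s ∪ t, Prp.basicOpen_union s t⟩
end

section
/- The space Prp(A) of proper ideals of a commutative ring A with identity, with the subspace topology from the coarse lower topology on Idl(A), is quasi-compact. -/
open TopologicalSpace

/-- The proper space `Prp(A)` is quasi-compact. -/
theorem prp_quasiCompact (A : Type*) [CommRing A] : CompactSpace (Prp A) := by
  constructor
  rw [isCompact_iff_ultrafilter_le_nhds]
  intro F hF
  -- the "limit" ideal of the ultrafilter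
  let J : Ideal A :=
    { carrier := {a : A | {S : Prp A | a ∈ (S : Ideal A)} ∈ F}
      zero_mem' := by
        have : {S : Prp A | (0 : A) ∈ (S : Ideal A)} = Set.univ := by
          ext S; simp [Submodule.zero_mem]
        simp only [Set.mem_setOf_eq, this]
        exact Filter.univ_mem
      add_mem' := by
        intro a b ha hb
        simp only [Set.mem_setOf_eq] at *
        filter_upwards [ha, hb] with S hSa hSb
        exact Submodule.add_mem _ hSa hSb
      smul_mem' := by
        intro c a ha
        simp only [Set.mem_setOf_eq] at *
        filter_upwards [ha] with S hSa
        exact Submodule.smul_mem _ _ hSa }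
  have hJ : J ≠ ⊤ := by
    intro h
    have h1 : (1 : A) ∈ J := h ▸ Submodule.mem_top
    have : {S : Prp A | (1 : A) ∈ (S : Ideal A)} ∈ F := h1
    have hempty : {S : Prp A | (1 : A) ∈ (S : Ideal A)} = ∅ := by
      ext S
      simp only [Set.mem_setOf_eq, Set.mem_empty_iff_false, iff_false]
      exact fun h1S => S.2 ((Ideal.eq_top_iff_one _).mpr h1S)
    rw [hempty] at this
    exact F.neBot.ne (Filter.empty_mem_iff_bot.mp this)
  refine ⟨⟨J, hJ⟩, ?_⟩
  have htop : (instTopologicalSpaceSubtype : TopologicalSpace (Prp A)) =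
      generateFrom ((fun U => (Subtype.val : Prp A → Ideal A) ⁻¹' U) ''
        {U : Set (Ideal A) | ∃ I : Ideal A, U = (vSet I)ᶜ}) := by
    rw [instTopologicalSpaceSubtype, coarseLower, induced_generateFrom_eq]
  rw [htop, nhds_generateFrom, le_iInf₂_iff]
  refine ⟨Set.mem_univ _, ?_⟩
  rintro s ⟨hJs, U, ⟨I, rfl⟩, rfl⟩
  rw [Filter.le_principal_iff]
  -- hJs : J ∈ val ⁻¹' (vSet I)ᶜ, i.e. ¬ I ≤ J
  have hIJ : ¬ I ≤ J := hJs
  obtain ⟨a, haI, haJ⟩ := SetLike.not_le_iff_exists.mp hIJ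
  have : {S : Prp A | a ∈ (S : Ideal A)}ᶜ ∈ F :=
    Ultrafilter.compl_mem_iff_notMem.mpr haJ
  refine Filter.mem_of_superset this ?_
  intro S hS
  simp only [Set.mem_compl_iff, Set.mem_setOf_eq] at hS
  intro hle
  exact hS (hle haI)
end

section
/- For every proper ideal I of a commutative ring A with identity, the subbasic closed set v(I) ∩ Prp(A) of the proper space Prp(A) equals the closure in Prp(A) of the singleton {I}; consequently every nonempty subbasic closed subset of Prp(A) is irreducible. -/
open TopologicalSpace

/-- Every open set in the coarse lower topology is a lower set. -/
lemma coarseLower_open_lower {A : Type*} [CommRing A] {U : Set (Ideal A)}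
    (hU : IsOpen U) {I S : Ideal A} (hIS : I ≤ S) (hS : S ∈ U) : I ∈ U := by
  induction hU with
  | basic V hV =>
      obtain ⟨J, rfl⟩ := hV
      intro hJI
      exact hS (hJI.trans hIS)
  | univ => trivial
  | inter V W _ _ ihV ihW => exact ⟨ihV hS.1, ihW hS.2⟩
  | sUnion 𝒮 _ ih =>
      obtain ⟨V, hV, hSV⟩ := hS
      exact ⟨V, hV, ih V hV hSV⟩

lemma vSet_closed {A : Type*} [CommRing A] (I : Ideal A) : IsClosed (vSet I) := by
  rw [← isOpen_compl_iff]
  exact TopologicalSpace.GenerateOpen.basic _ ⟨I, rfl⟩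

lemma prp_vSet_eq_closure {A : Type*} [CommRing A] (I : Ideal A) (hI : I ≠ ⊤) :
    {S : Prp A | I ≤ S.1} = closure {(⟨I, hI⟩ : Prp A)} := by
  apply le_antisymm
  · intro S hS
    rw [mem_closure_iff]
    intro U hU hSU
    obtain ⟨V, hV, rfl⟩ := isOpen_induced_iff.mp hU
    exact ⟨⟨I, hI⟩, coarseLower_open_lower hV hS hSU, rfl⟩
  · apply closure_minimal
    · intro S hS
      simp only [Set.mem_singleton_iff] at hS
      subst hS
      exact le_refl I
    · exact (vSet_closed I).preimage continuous_subtype_val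

/-- For a proper ideal `I`, the subbasic closed set `v(I) ∩ Prp(A)` of the proper space
equals the closure of `{I}` in `Prp(A)`; consequently every nonempty subbasic closed subset
of `Prp(A)` is irreducible. -/
theorem prp_vSet_eq_closure_and_irreducible (A : Type*) [CommRing A] :
    (∀ (I : Ideal A) (hI : I ≠ ⊤),
      {S : Prp A | I ≤ S.1} = closure {(⟨I, hI⟩ : Prp A)}) ∧
    (∀ J : Ideal A, {S : Prp A | J ≤ S.1}.Nonempty →
      IsIrreducible {S : Prp A | J ≤ S.1}) := by
  refine ⟨fun I hI => prp_vSet_eq_closure I hI, fun J hJ => ?_⟩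
  obtain ⟨S, hS⟩ := hJ
  have hJtop : J ≠ ⊤ := fun h => S.2 (top_le_iff.mp (h ▸ hS))
  rw [prp_vSet_eq_closure J hJtop]
  exact isIrreducible_singleton.closure
end

section
/- If C is a nonempty irreducible closed subset of the proper space Prp(A) of a commutative ring A with identity, then C = v(I) ∩ Prp(A) for some proper ideal I of A. -/
open TopologicalSpace

/-- Every nonempty irreducible closed subset of the proper space `Prp(A)` is of the form
`v(I) ∩ Prp(A)` for some proper ideal `I`. -/
theorem prp_irreducible_closed_eq_vSet (A : Type*) [CommRing A] (C : Set (Prp A))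
    (hC : IsClosed C) (hirr : IsIrreducible C) :
    ∃ I : Ideal A, I ≠ ⊤ ∧ C = {S : Prp A | I ≤ S.1} := by
  classical
  set I₀ : Ideal A := sInf (Subtype.val '' C) with hI₀
  obtain ⟨S₀, hS₀⟩ := hirr.nonempty
  have hle : ∀ S ∈ C, I₀ ≤ (S : Prp A).1 := fun S hS => sInf_le ⟨S, hS, rfl⟩
  have hI₀top : I₀ ≠ ⊤ := by
    intro h
    have h2 := hle S₀ hS₀
    rw [h] at h2
    exact S₀.2 (top_le_iff.mp h2)
  refine ⟨I₀, hI₀top, Set.Subset.antisymm (fun S hS => hle S hS) ?_⟩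
  intro T hT
  by_contra hTC
  have hopen : IsOpen Cᶜ := hC.isOpen_compl
  rw [isOpen_induced_iff] at hopen
  obtain ⟨U, hU, hUC⟩ := hopen
  have hTU : T.1 ∈ U := by
    have : T ∈ Subtype.val ⁻¹' U := hUC ▸ hTC
    exact this
  have hbasis := TopologicalSpace.isTopologicalBasis_of_subbasis
    (rfl : coarseLower A = TopologicalSpace.generateFrom
      {U : Set (Ideal A) | ∃ I : Ideal A, U = (vSet I)ᶜ})
  obtain ⟨v, ⟨F, ⟨hFfin, hFsub⟩, rfl⟩, hTv, hvU⟩ :=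
    hbasis.exists_subset_of_mem_open hTU hU
  have hFsub' : ∀ u ∈ F, ∃ I : Ideal A, u = (vSet I)ᶜ := fun u hu => hFsub hu
  choose! φ hφ using hFsub'
  -- the finitely many closed sets covering C
  set Z : Finset (Set (Prp A)) :=
    hFfin.toFinset.image (fun u => {S : Prp A | φ u ≤ S.1}) with hZ
  have hZclosed : ∀ z ∈ Z, IsClosed z := by
    intro z hz
    rw [hZ, Finset.mem_image] at hz
    obtain ⟨u, _, rfl⟩ := hz
    exact (vSet_closed (φ u)).preimage continuous_subtype_val
  have hcover : C ⊆ ⋃₀ ↑Z := by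
    intro S hS
    have hSU : S.1 ∉ U := by
      intro h
      exact hTC.elim (by
        have : S ∈ Cᶜ := hUC ▸ (h : S ∈ Subtype.val ⁻¹' U)
        exact absurd hS this)
    have : ¬ S.1 ∈ ⋂₀ F := fun h => hSU (hvU h)
    rw [Set.mem_sInter] at this
    push_neg at this
    obtain ⟨u, huF, hSu⟩ := this
    refine ⟨{S : Prp A | φ u ≤ S.1}, ?_, ?_⟩
    · rw [hZ]
      exact Finset.mem_image.mpr ⟨u, hFfin.mem_toFinset.mpr huF, rfl⟩
    · have := hφ u huF
      rw [this] at hSu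
      simpa [vSet] using not_not.mp hSu
  obtain ⟨z, hzZ, hCz⟩ := (isIrreducible_iff_sUnion_isClosed.mp hirr) Z hZclosed hcover
  rw [hZ, Finset.mem_image] at hzZ
  obtain ⟨u, huF, rfl⟩ := hzZ
  have huF' : u ∈ F := hFfin.mem_toFinset.mp huF
  have hφI₀ : φ u ≤ I₀ := le_sInf (by rintro J ⟨S, hS, rfl⟩; exact hCz hS)
  have hTu : T.1 ∈ u := hTv u huF'
  rw [hφ u huF'] at hTu
  exact hTu (le_trans hφI₀ hT)
end

section
/- The space Prp(A) of proper ideals of a commutative ring A with identity, with the subspace topology from the coarse lower topology on Idl(A), is sober: it is T₀ and every nonempty irreducible closed subset of Prp(A) is the closure of a unique point. -/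
open TopologicalSpace

section Aux

variable {A : Type*} [CommRing A]

lemma isClosed_vSet (I : Ideal A) : IsClosed (vSet I) :=
  ⟨TopologicalSpace.GenerateOpen.basic _ ⟨I, rfl⟩⟩

lemma aux_open {D : Set (Ideal A)} (hD : IsPreirreducible D) (hne : D.Nonempty)
    {S : Ideal A} (hS : ∀ I : Ideal A, D ⊆ vSet I → I ≤ S) :
    ∀ U : Set (Ideal A),
      TopologicalSpace.GenerateOpen {U : Set (Ideal A) | ∃ I : Ideal A, U = (vSet I)ᶜ} U →
      S ∈ U → (D ∩ U).Nonempty := by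
  intro U hU
  induction hU with
  | basic V hV =>
      obtain ⟨I, rfl⟩ := hV
      intro hSV
      by_contra h
      have hsub : D ⊆ vSet I := by
        intro T hT
        by_contra hT'
        exact h ⟨T, hT, hT'⟩
      exact hSV (hS I hsub)
  | univ => intro _; simpa using hne
  | inter U V hUo hVo ihU ihV =>
      rintro ⟨hSU, hSV⟩
      exact hD U V hUo hVo (ihU hSU) (ihV hSV)
  | sUnion 𝒮 h ih =>
      rintro ⟨t, ht, hSt⟩
      obtain ⟨x, hx, hxt⟩ := ih t ht hSt
      exact ⟨x, hx, t, ht, hxt⟩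

lemma mem_closure_aux {D : Set (Ideal A)} (hD : IsPreirreducible D) (hne : D.Nonempty)
    {S : Ideal A} (hS : ∀ I : Ideal A, D ⊆ vSet I → I ≤ S) : S ∈ closure D := by
  rw [mem_closure_iff]
  intro U hU hSU
  obtain ⟨x, hx, hxU⟩ := aux_open hD hne hS U hU hSU
  exact ⟨x, hxU, hx⟩

lemma closure_singleton_idl (J : Ideal A) : closure {J} = vSet J := by
  apply subset_antisymm
  · exact closure_minimal (fun x hx => hx.ge) (isClosed_vSet J)
  · intro S hS
    exact mem_closure_aux isIrreducible_singleton.2 ⟨J, rfl⟩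
      (fun I hI => le_trans (hI rfl) hS)

lemma closure_singleton_prp (I : Prp A) :
    closure {I} = {x : Prp A | I.1 ≤ x.1} := by
  ext x
  rw [closure_subtype, Set.image_singleton, closure_singleton_idl]
  exact Iff.rfl

end Aux

/-- The proper space `Prp(A)` is sober: it is T₀ and every nonempty irreducible closed
subset is the closure of a unique point. -/
theorem prp_sober (A : Type*) [CommRing A] :
    T0Space (Prp A) ∧
    ∀ C : Set (Prp A), IsClosed C → IsIrreducible C →
      ∃! I : Prp A, closure {I} = C := by
  constructor
  · rw [t0Space_iff_inseparable]
    intro x y h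
    have h' : closure ({x} : Set (Prp A)) = closure {y} :=
      inseparable_iff_closure_eq.mp h
    rw [closure_singleton_prp, closure_singleton_prp] at h'
    have h1 : y.1 ≤ x.1 := by
      have : x ∈ {z : Prp A | y.1 ≤ z.1} := h' ▸ (le_refl x.1 : x ∈ {z : Prp A | x.1 ≤ z.1})
      exact this
    have h2 : x.1 ≤ y.1 := by
      have : y ∈ {z : Prp A | x.1 ≤ z.1} := h'.symm ▸ (le_refl y.1 : y ∈ {z : Prp A | y.1 ≤ z.1})
      exact this
    exact Subtype.ext (le_antisymm h2 h1)
  · intro C hCcl hCirr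
    set D : Set (Ideal A) := closure (Subtype.val '' C) with hDdef
    have hDirr : IsIrreducible D :=
      (hCirr.image _ continuous_subtype_val.continuousOn).closure
    set J : Ideal A := sInf D with hJdef
    have hJmem : J ∈ D := by
      have := mem_closure_aux hDirr.2 hDirr.1
        (fun I hI => le_sInf fun S hS => hI hS)
      rwa [isClosed_closure.closure_eq] at this
    have hDeq : D = vSet J := by
      apply subset_antisymm
      · intro S hS; exact sInf_le hS
      · rw [← closure_singleton_idl]
        exact closure_minimal (Set.singleton_subset_iff.mpr hJmem) isClosed_closure
    -- C equals the preimage of D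
    have hCD : C = Subtype.val ⁻¹' D := by
      apply subset_antisymm
      · intro x hx
        exact subset_closure ⟨x, hx, rfl⟩
      · obtain ⟨F, hFcl, hFeq⟩ := isClosed_induced_iff.mp hCcl
        have himg : Subtype.val '' C ⊆ F := by
          rintro _ ⟨x, hx, rfl⟩
          rw [← hFeq] at hx
          exact hx
        have hDF : D ⊆ F := closure_minimal himg hFcl
        intro x hx
        rw [← hFeq]
        exact hDF hx
    have hJtop : J ≠ ⊤ := by
      obtain ⟨x, hx⟩ := hCirr.1
      have hJx : J ≤ x.1 := sInf_le (subset_closure ⟨x, hx, rfl⟩)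
      intro hJ
      rw [hJ] at hJx
      exact x.2 (top_le_iff.mp hJx)
    refine ⟨⟨J, hJtop⟩, ?_, ?_⟩
    · show closure ({⟨J, hJtop⟩} : Set (Prp A)) = C
      rw [closure_singleton_prp, hCD, hDeq]
      rfl
    · intro I' hI'
      have hclo : closure ({⟨J, hJtop⟩} : Set (Prp A)) = C := by
        rw [closure_singleton_prp, hCD, hDeq]; rfl
      rw [closure_singleton_prp] at hI' hclo
      have h1 : J ≤ I'.1 := by
        have : I' ∈ C := hI' ▸ (le_refl I'.1 : I' ∈ {z : Prp A | I'.1 ≤ z.1})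
        rw [← hclo] at this
        exact this
      have h2 : I'.1 ≤ J := by
        have : (⟨J, hJtop⟩ : Prp A) ∈ C :=
          hclo ▸ (le_refl J : (⟨J, hJtop⟩ : Prp A) ∈ {z : Prp A | J ≤ z.1})
        rw [← hI'] at this
        exact this
      exact Subtype.ext (le_antisymm h2 h1)
end

section
/- The ideal space Idl(A) of all ideals of a commutative ring A with identity, endowed with the coarse lower topology, is a spectral space: it is quasi-compact, sober, and has a basis of quasi-compact open sets that is closed under finite intersections. -/
open TopologicalSpace

/-!
`Idl(A)` is an algebraic lattice (the compact elements are the finitely generated ideals) and the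
coarse lower topology is its lower topology, so everything holds for such lattices. Every
ultrafilter `f` converges to `x = sSup {a | Ici a ∈ f}`, and if a compact `k` lies below `x` then
`Ici k ∈ f`; hence `{y | ∀ k ∈ s, ¬ k ≤ y}` is compact for any set `s` of compact elements, and
for finite `s` these sets form a basis closed under intersections. An irreducible closed set `S`
cannot be covered by finitely many `Ici a` missing `sInf S`, so it contains `sInf S`, which is
then its generic point.
-/

open Set Filter Topology

theorem IsIrreducible.exists_subset_of_subset_biUnion {X ι : Type*} [TopologicalSpace X]
    {S : Set X} (hS : IsIrreducible S) {t : Set ι} (ht : t.Finite) {Z : ι → Set X}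
    (hZ : ∀ i ∈ t, IsClosed (Z i)) (hSZ : S ⊆ ⋃ i ∈ t, Z i) : ∃ i ∈ t, S ⊆ Z i := by
  induction t, ht using Set.Finite.induction_on with
  | empty => simp [hS.nonempty.ne_empty] at hSZ
  | @insert a t _ ht ih =>
    rw [biUnion_insert] at hSZ
    rcases isPreirreducible_iff_isClosed_union_isClosed.1 hS.isPreirreducible _ _
        (hZ a (mem_insert a t)) (ht.isClosed_biUnion fun i hi => hZ i (mem_insert_of_mem a hi))
        hSZ with h | h
    · exact ⟨a, mem_insert a t, h⟩
    · obtain ⟨i, hi, hSi⟩ := ih (fun i hi => hZ i (mem_insert_of_mem a hi)) h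
      exact ⟨i, mem_insert_of_mem a hi, hSi⟩

section CompleteLattice

variable {α : Type*} [CompleteLattice α]

theorem IsCompactElement.Ici_mem_of_le_sSup {k : α} (hk : IsCompactElement k) {f : Filter α}
    (hle : k ≤ sSup {a | Ici a ∈ f}) : Ici k ∈ f := by
  have hdir : DirectedOn (· ≤ ·) {a | Ici a ∈ f} := fun a ha b hb =>
    ⟨a ⊔ b, by simpa only [mem_ofPred_eq, ← Ici_inter_Ici] using inter_mem ha hb,
      le_sup_left, le_sup_right⟩
  obtain ⟨a, ha, hka⟩ := (CompleteLattice.isCompactElement_iff_le_of_directed_sSup_le α k).1 hk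
    _ ⟨⊥, by simp⟩ hdir hle
  exact mem_of_superset ha (Ici_subset_Ici.2 hka)

namespace Topology.IsLower

variable (α) in
def compactLowerBasis : Set (Set α) :=
  {U | ∃ t : Set α, t.Finite ∧ (∀ k ∈ t, IsCompactElement k) ∧ (upperClosure t : Set α)ᶜ = U}

theorem inter_mem_compactLowerBasis {U V : Set α} (hU : U ∈ compactLowerBasis α)
    (hV : V ∈ compactLowerBasis α) : U ∩ V ∈ compactLowerBasis α := by
  obtain ⟨s, hs, hsc, rfl⟩ := hU
  obtain ⟨t, ht, htc, rfl⟩ := hV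
  refine ⟨s ∪ t, hs.union ht, fun k hk => hk.elim (hsc k) (htc k), ?_⟩
  rw [upperClosure_union, UpperSet.coe_inf, compl_union]

variable [TopologicalSpace α] [IsLower α]

theorem ultrafilter_le_nhds_sSup (f : Ultrafilter α) :
    (f : Filter α) ≤ 𝓝 (sSup {a | Ici a ∈ f}) :=
  tendsto_nhds_iff_not_le.2 fun _ hy =>
    Ultrafilter.compl_mem_iff_notMem.2 fun hmem => hy (le_sSup hmem)

theorem isCompact_compl_upperClosure {s : Set α} (hs : ∀ k ∈ s, IsCompactElement k) :
    IsCompact (upperClosure s : Set α)ᶜ := by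
  refine isCompact_iff_ultrafilter_le_nhds.2 fun f hf => ⟨_, ?_, ultrafilter_le_nhds_sSup f⟩
  rintro ⟨k, hks, hk⟩
  obtain ⟨y, hy, hky⟩ := f.nonempty_of_mem
    (inter_mem (le_principal_iff.1 hf) ((hs k hks).Ici_mem_of_le_sSup hk))
  exact hy ⟨k, hks, hky⟩

theorem compactSpace : CompactSpace α :=
  ⟨by simpa using isCompact_compl_upperClosure (α := α) (s := ∅) (by simp)⟩

theorem sInf_mem_of_isIrreducible {S : Set α} (hS : IsIrreducible S) (hSc : IsClosed S) :
    sInf S ∈ S := by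
  by_contra hnot
  obtain ⟨_, ⟨t, ht, rfl⟩, hnot_mem, hsub⟩ :=
    IsLower.isTopologicalBasis.exists_subset_of_mem_open hnot hSc.isOpen_compl
  have hcover : S ⊆ ⋃ a ∈ t, Ici a := by
    rw [← coe_upperClosure]
    exact compl_subset_compl.1 hsub
  obtain ⟨a, hat, hSa⟩ := hS.exists_subset_of_subset_biUnion ht (fun a _ => isClosed_Ici) hcover
  exact hnot_mem ⟨a, hat, le_sInf hSa⟩

theorem quasiSober : QuasiSober α where
  sober hS hSc := ⟨sInf _, by
    rw [IsGenericPoint, closure_singleton]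
    exact ((isUpperSet_of_isClosed hSc).Ici_subset (sInf_mem_of_isIrreducible hS hSc)).antisymm
      fun _ hx => sInf_le hx⟩

theorem isOpen_of_mem_compactLowerBasis {U : Set α} (hU : U ∈ compactLowerBasis α) :
    IsOpen U := by
  obtain ⟨t, ht, -, rfl⟩ := hU
  exact (isClosed_upperClosure ht).isOpen_compl

theorem isCompact_of_mem_compactLowerBasis {U : Set α} (hU : U ∈ compactLowerBasis α) :
    IsCompact U := by
  obtain ⟨t, -, htc, rfl⟩ := hU
  exact isCompact_compl_upperClosure htc

theorem isTopologicalBasis_compactLowerBasis [IsCompactlyGenerated α] :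
    IsTopologicalBasis (compactLowerBasis α) := by
  refine isTopologicalBasis_of_isOpen_of_nhds (fun _ => isOpen_of_mem_compactLowerBasis) ?_
  intro x O hxO hO
  obtain ⟨_, ⟨t, ht, rfl⟩, hxt, htO⟩ := IsLower.isTopologicalBasis.exists_subset_of_mem_open hxO hO
  -- compact generation lets each `a ∈ t` be replaced by a compact element below it, still `≰ x`
  have hcompact : ∀ a ∈ t, ∃ c, IsCompactElement c ∧ c ≤ a ∧ ¬ c ≤ x := by
    intro a ha
    have hax : ¬ a ≤ x := fun h => hxt ⟨a, ha, h⟩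
    simpa only [le_iff_compact_le_imp (a := a), not_forall, exists_prop] using hax
  choose! c hc hca hcx using hcompact
  refine ⟨_, ⟨c '' t, ht.image c, forall_mem_image.2 hc, rfl⟩, ?_, ?_⟩
  · rintro ⟨_, ⟨a, ha, rfl⟩, hle⟩
    exact hcx a ha hle
  · refine (compl_subset_compl.2 ?_).trans htO
    rintro y ⟨a, ha, hay⟩
    exact ⟨c a, mem_image_of_mem c ha, (hca a ha).trans hay⟩

end Topology.IsLower

end CompleteLattice

instance Ideal.isLower (A : Type*) [CommRing A] : IsLower (Ideal A) :=
  ⟨congrArg generateFrom <| Set.ext fun _ => exists_congr fun _ => eq_comm⟩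

/-- The ideal space `Idl(A)` with the coarse lower topology is spectral: quasi-compact,
sober (T₀ and quasi-sober), with a basis of quasi-compact open sets closed under finite
intersections. -/
theorem idl_isSpectral (A : Type*) [CommRing A] :
    CompactSpace (Ideal A) ∧ T0Space (Ideal A) ∧ QuasiSober (Ideal A) ∧
      ∃ B : Set (Set (Ideal A)), IsTopologicalBasis B ∧
        (∀ U ∈ B, IsOpen U ∧ IsCompact U) ∧
        (∀ U ∈ B, ∀ V ∈ B, U ∩ V ∈ B) :=
  ⟨IsLower.compactSpace, inferInstance, IsLower.quasiSober, IsLower.compactLowerBasis (Ideal A),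
    IsLower.isTopologicalBasis_compactLowerBasis,
    fun _ hU => ⟨IsLower.isOpen_of_mem_compactLowerBasis hU,
      IsLower.isCompact_of_mem_compactLowerBasis hU⟩,
    fun _ hU _ hV => IsLower.inter_mem_compactLowerBasis hU hV⟩
end
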